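/- For every positive integer k and every prime power p ≤ k, f(k, pk) = p². -/

import Mathlib

open Finset

/-- The elements of `S` on the `A` side (left side). -/
def sideA {N : ℕ} (S : Finset (Fin N ⊕ Fin N)) : Finset (Fin N ⊕ Fin N) :=
  S.filter (fun x => x.isLeft)

/-- The elements of `S` on the `B` side (right side). -/
def sideB {N : ℕ} (S : Finset (Fin N ⊕ Fin N)) : Finset (Fin N ⊕ Fin N) :=
  S.filter (fun x => x.isRight)

/-- A family of subsets of `A ∪ B` is semiintersecting if every member meets each side in
exactly `k` elements, and any two distinct members are disjoint in exactly one of the sides. -/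
def Semiintersecting (k N : ℕ) (F : Finset (Finset (Fin N ⊕ Fin N))) : Prop :=
  (∀ S ∈ F, (sideA S).card = k ∧ (sideB S).card = k) ∧
  (∀ S ∈ F, ∀ T ∈ F, S ≠ T →
      ((sideA S ∩ sideA T = ∅) ↔ (sideB S ∩ sideB T ≠ ∅)))

/-- `f k N`: the maximum cardinality of a semiintersecting family with parameters `k`, `N`. -/
noncomputable def semiMax (k N : ℕ) : ℕ :=
  sSup {n | ∃ F : Finset (Finset (Fin N ⊕ Fin N)), Semiintersecting k N F ∧ F.card = n}

/-!
Members through a fixed point of `A` pairwise meet in `A`, so their `B`-sides are pairwise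
disjoint and there are at most `⌊N/k⌋` of them; counting incidences with `A` then gives
`|F| k ≤ N ⌊N/k⌋`, which is `p²k²` for `N = pk`.

Conversely, for a field `K` of order `q ≤ k`, take one member per affine line `t ↦ x t + y` of
`K²`: its `A`-side is the column of the slope `x`, its `B`-side is the graph of the line padded
by `k - q` points in the column of the intercept `y`. Two `A`-sides meet iff the lines are
parallel, and two `B`-sides meet iff they are not.
-/

theorem sideA_eq_map_toLeft {N : ℕ} (S : Finset (Fin N ⊕ Fin N)) :
    sideA S = S.toLeft.map .inl := by
  ext (a | b) <;> simp [sideA]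

theorem sideB_eq_map_toRight {N : ℕ} (S : Finset (Fin N ⊕ Fin N)) :
    sideB S = S.toRight.map .inr := by
  ext (a | b) <;> simp [sideB]

theorem semiintersecting_iff {k N : ℕ} {F : Finset (Finset (Fin N ⊕ Fin N))} :
    Semiintersecting k N F ↔
      (∀ S ∈ F, #S.toLeft = k ∧ #S.toRight = k) ∧
      ∀ S ∈ F, ∀ T ∈ F, S ≠ T →
        (Disjoint S.toLeft T.toLeft ↔ ¬Disjoint S.toRight T.toRight) := by
  simp only [Semiintersecting, sideA_eq_map_toLeft, sideB_eq_map_toRight, card_map,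
    ← disjoint_iff_inter_eq_empty, disjoint_map, ne_eq]

namespace Semiintersecting

variable {k N : ℕ} {F : Finset (Finset (Fin N ⊕ Fin N))}

theorem card_filter_mem_toLeft_mul_le (hF : Semiintersecting k N F) (a : Fin N) :
    #{S ∈ F | a ∈ S.toLeft} * k ≤ N := by
  obtain ⟨hcard, hdisj⟩ := semiintersecting_iff.mp hF
  set star := {S ∈ F | a ∈ S.toLeft}
  have hstar : (star : Set (Finset (Fin N ⊕ Fin N))).PairwiseDisjoint toRight := by
    intro S hS T hT hST
    simp only [star, mem_coe, mem_filter] at hS hT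
    by_contra h
    exact (hdisj S hS.1 T hT.1 hST).mpr h |>.notMem_of_mem_left_finset hS.2 hT.2
  calc #star * k = ∑ S ∈ star, #S.toRight :=
        (sum_const_nat fun S hS => (hcard S (mem_filter.mp hS).1).2).symm
    _ = #(star.biUnion toRight) := (card_biUnion hstar).symm
    _ ≤ N := (card_le_univ _).trans_eq (Fintype.card_fin N)

theorem card_le (hF : Semiintersecting k N F) (hk : 0 < k) : #F ≤ N * (N / k) / k := by
  have hcard := (semiintersecting_iff.mp hF).1
  have hcount := card_nsmul_le_card_nsmul (fun S a => a ∈ S.toLeft) (s := F) (t := univ)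
    (m := k) (n := N / k)
    (fun S hS => by
      simp only [bipartiteAbove, filter_univ_mem, (hcard S hS).1, Nat.cast_id, le_refl])
    (fun a _ => (Nat.le_div_iff_mul_le hk).mpr (hF.card_filter_mem_toLeft_mul_le a))
  rw [Nat.le_div_iff_mul_le hk]
  simpa using hcount

end Semiintersecting

theorem Finset.disjoint_disjSum_disjSum {α β : Type*} {s s' : Finset α} {t t' : Finset β} :
    Disjoint (s.disjSum t) (s'.disjSum t') ↔ Disjoint s s' ∧ Disjoint t t' := by
  simp [disjoint_left]

theorem exists_semiintersecting_of_pairs {k N : ℕ} {ι α : Type*} [Fintype ι] (e : α ≃ Fin N)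
    (a b : ι → Finset α) (ha : ∀ i, #(a i) = k) (hb : ∀ i, #(b i) = k)
    (hab : ∀ i j, i ≠ j → (Disjoint (a i) (a j) ↔ ¬Disjoint (b i) (b j))) :
    ∃ F, Semiintersecting k N F ∧ #F = Fintype.card ι := by
  classical
  set member : ι → Finset (Fin N ⊕ Fin N) := fun i => ((a i).map e).disjSum ((b i).map e)
  have hinj : Function.Injective member := by
    intro i j hij
    simp only [member, disjSum_inj, map_inj] at hij
    by_contra hne
    have := hab i j hne
    rw [hij.1, hij.2, disjoint_self_iff_empty, disjoint_self_iff_empty, ← card_eq_zero,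
      ← card_eq_zero, ha, hb] at this
    exact iff_not_self this
  refine ⟨univ.image member, semiintersecting_iff.mpr ⟨?_, ?_⟩,
    card_image_of_injective _ hinj⟩
  · simp [member, ha, hb]
  · simp only [mem_image, mem_univ, true_and]
    rintro _ ⟨i, rfl⟩ _ ⟨j, rfl⟩ hij
    simpa [member] using hab i j (hinj.ne_iff.mp hij)

section AffinePlane

variable {K : Type*} [Fintype K] (m : ℕ)

-- The ground set `(K × K) ⊕ (K × Fin m)` is the plane `K²` with `m` padding points added to
-- each column, so that columns have height `|K| + m`.
def column (x : K) : Finset ((K × K) ⊕ (K × Fin m)) :=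
  ({x} ×ˢ univ).disjSum ({x} ×ˢ univ)

theorem card_column (x : K) : #(column m x) = Fintype.card K + m := by
  simp [column]

variable [Field K]

theorem disjoint_column_iff {x x' : K} : Disjoint (column m x) (column m x') ↔ x ≠ x' := by
  simp only [column, disjoint_disjSum_disjSum, disjoint_product, disjoint_singleton,
    disjoint_self_iff_empty, univ_eq_empty_iff, not_isEmpty_of_nonempty, or_false]
  exact and_iff_left_of_imp .inl

variable [DecidableEq K]

def paddedLine (x y : K) : Finset ((K × K) ⊕ (K × Fin m)) :=
  ({z : K × K | z.2 = x * z.1 + y} : Finset (K × K)).disjSum ({y} ×ˢ univ)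

theorem card_paddedLine (x y : K) : #(paddedLine m x y) = Fintype.card K + m := by
  simp only [paddedLine, card_disjSum, card_filter, Fintype.sum_prod_type, sum_ite_eq', mem_univ,
    if_true, sum_const, card_univ, smul_eq_mul, mul_one, card_product, card_singleton, one_mul,
    Fintype.card_fin]

theorem disjoint_paddedLine_iff {x y x' y' : K} (h : (x, y) ≠ (x', y')) :
    Disjoint (paddedLine m x y) (paddedLine m x' y') ↔ x = x' := by
  rw [paddedLine, paddedLine, disjoint_disjSum_disjSum]
  constructor
  · rintro ⟨hline, -⟩
    by_contra hx
    have hx' : x - x' ≠ 0 := sub_ne_zero.mpr hx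
    set t := (y' - y) / (x - x')
    have ht : (x - x') * t = y' - y := mul_div_cancel₀ _ hx'
    refine disjoint_left.mp hline (show (t, x * t + y) ∈ _ by simp) ?_
    simp only [mem_filter, mem_univ, true_and]
    linear_combination ht
  · rintro rfl
    have hy : y ≠ y' := by simpa using h
    refine ⟨disjoint_left.mpr ?_, disjoint_product.mpr (.inl (disjoint_singleton.mpr hy))⟩
    intro z hz hz'
    simp only [mem_filter, mem_univ, true_and] at hz hz'
    exact hy (by linear_combination hz' - hz)

end AffinePlane

theorem exists_semiintersecting_card_eq_sq (K : Type*) [Field K] [Fintype K] {q k : ℕ}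
    (hq : Fintype.card K = q) (hqk : q ≤ k) :
    ∃ F, Semiintersecting k (q * k) F ∧ #F = q ^ 2 := by
  classical
  have hk : Fintype.card K + (k - q) = k := by rw [hq]; exact Nat.add_sub_cancel' hqk
  let e : (K × K) ⊕ (K × Fin (k - q)) ≃ Fin (q * k) := Fintype.equivFinOfCardEq <| by
    rw [Fintype.card_sum, Fintype.card_prod, Fintype.card_prod, Fintype.card_fin, ← mul_add, hk,
      hq]
  obtain ⟨F, hF, hcard⟩ := exists_semiintersecting_of_pairs e
    (fun i : K × K => column (k - q) i.1) (fun i => paddedLine (k - q) i.1 i.2)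
    (fun _ => (card_column ..).trans hk) (fun _ => (card_paddedLine ..).trans hk)
    (fun i j hij => by rw [disjoint_column_iff, disjoint_paddedLine_iff _ hij, ne_eq])
  exact ⟨F, hF, by rw [hcard, Fintype.card_prod, hq, sq]⟩

theorem semiMax_pk_eq_general (k p : ℕ) (hp : IsPrimePow p) (hpk : p ≤ k) :
    semiMax k (p * k) = p ^ 2 := by
  obtain ⟨_⟩ : Nonempty (Field (Fin p)) := Fintype.nonempty_field_iff.mpr (by simpa using hp)
  have hk : 0 < k := hp.pos.trans_le hpk
  refine IsGreatest.csSup_eq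
    ⟨exists_semiintersecting_card_eq_sq (Fin p) (Fintype.card_fin p) hpk, ?_⟩
  rintro _ ⟨F, hF, rfl⟩
  calc #F ≤ p * k * (p * k / k) / k := hF.card_le hk
    _ = p ^ 2 := by rw [Nat.mul_div_cancel _ hk, mul_right_comm, ← sq, Nat.mul_div_cancel _ hk]

theorem semiMax_pk_eq (k p : ℕ) (hk : 0 < k) (hp : IsPrimePow p) (hpk : p ≤ k) :
    semiMax k (p * k) = p ^ 2 :=
  semiMax_pk_eq_general k p hp hpk
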